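/- For nonnegative integers n, p, r with r = n - 2p and any s with 0 ≤ s ≤ n - p, the identity v^{s(1-r)+2(p-n)(p+1)} [p+s]_{(s)} = ∑_{k=s}^{n-p} (-1)^{k+s} ([p+k]_{(k)}/[k-s]!) [(n-p-s) choose (k-s)] v^{k(r-2k-1) + (k-s)(3k+s-1)/2} {k-s} holds in Q(v), where {m} = ∏_{a=1}^{m} (v^a - v^{-a}) with {0} = 1. -/

import Mathlib

noncomputable section

open Finset

/-- The field `ℚ(v)` of rational functions, with `v` an indeterminate. -/
abbrev Fv : Type := RatFunc ℚ

/-- The indeterminate `v`. -/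
def vv : Fv := RatFunc.X

/-- Quantum integer `[m] = (v^m - v^{-m})/(v - v^{-1})`. -/
def qint (m : ℤ) : Fv := (vv ^ m - vv ^ (-m)) / (vv - vv⁻¹)

/-- Quantum factorial `[n]! = [n][n-1]⋯[1]`, with `[0]! = 1`. -/
def qfact (n : ℕ) : Fv := ∏ i ∈ Finset.range n, qint (i + 1)

/-- Falling quantum factorial `[m]_{(j)} = [m][m-1]⋯[m-j+1]`, defined for any integer `m`. -/
def qfall (m : ℤ) (j : ℕ) : Fv := ∏ i ∈ Finset.range j, qint (m - i)

/-- Quantum binomial coefficient `[m choose j] = [m]_{(j)}/[j]!`, for any integer `m`. -/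
def qbinom (m : ℤ) (j : ℕ) : Fv := qfall m j / qfact j


/-- The symbol `{m} = ∏_{a=1}^{m} (v^a - v^{-a})`, with `{0} = 1`. -/
def qbrace (m : ℕ) : Fv := ∏ a ∈ Finset.range m, (vv ^ (a + 1) - vv⁻¹ ^ (a + 1))

lemma vv_ne_zero : vv ≠ 0 := RatFunc.X_ne_zero

lemma vv_pow_ne_one {t : ℕ} (ht : 0 < t) : vv ^ t ≠ 1 := by
  intro h
  have h2 : algebraMap (Polynomial ℚ) Fv (Polynomial.X ^ t) = algebraMap (Polynomial ℚ) Fv 1 := by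
    rw [map_pow, map_one, RatFunc.algebraMap_X]; exact h
  have h3 := RatFunc.algebraMap_injective ℚ h2
  have h4 := congrArg Polynomial.natDegree h3
  simp [Polynomial.natDegree_X_pow] at h4
  omega

lemma vvsub_ne_zero : vv - vv⁻¹ ≠ 0 := by
  intro h
  have h1 : vv = vv⁻¹ := sub_eq_zero.mp h
  have h2 : vv * vv = 1 := by
    nth_rewrite 2 [h1]; exact mul_inv_cancel₀ vv_ne_zero
  have : vv ^ 2 = 1 := by rw [pow_two]; exact h2
  exact vv_pow_ne_one (by norm_num) this

lemma qint_mul (m : ℤ) : qint m * (vv - vv⁻¹) = vv ^ m - vv ^ (-m) :=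
  div_mul_cancel₀ _ vvsub_ne_zero

lemma vv_zpow_sub_ne_zero {m : ℤ} (hm : 0 < m) : vv ^ m - vv ^ (-m) ≠ 0 := by
  intro h
  have h1 : vv ^ m = vv ^ (-m) := sub_eq_zero.mp h
  have h2 : vv ^ (2 * m) = 1 := by
    have := congrArg (· * vv ^ m) h1
    simp only [zpow_neg] at this
    rw [inv_mul_cancel₀ (zpow_ne_zero m vv_ne_zero)] at this
    rw [two_mul, zpow_add₀ vv_ne_zero]; exact this
  have h3 : vv ^ ((2 * m).toNat) = 1 := by
    rw [← zpow_natCast, Int.toNat_of_nonneg (by omega)]; exact h2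
  exact vv_pow_ne_one (by omega) h3

lemma qint_ne_zero {m : ℤ} (hm : 0 < m) : qint m ≠ 0 :=
  div_ne_zero (vv_zpow_sub_ne_zero hm) vvsub_ne_zero

lemma qint_split (m : ℤ) (j : ℤ) :
    qint m = vv ^ (-j) * qint (m - j) + vv ^ (m - j) * qint j := by
  have hv := vv_ne_zero
  apply mul_right_cancel₀ vvsub_ne_zero
  rw [add_mul, mul_assoc, mul_assoc, qint_mul, qint_mul, qint_mul]
  rw [mul_sub, mul_sub, ← zpow_add₀ hv, ← zpow_add₀ hv, ← zpow_add₀ hv, ← zpow_add₀ hv,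
      show -j + (m - j) = m - 2*j by ring, show -j + -(m - j) = -m by ring,
      show m - j + (j:ℤ) = m by ring, show m - j + -j = m - 2*j by ring]
  ring

lemma qfact_succ (j : ℕ) : qfact (j + 1) = qfact j * qint (j + 1) := by
  rw [qfact, Finset.prod_range_succ]; norm_cast

lemma qfact_ne_zero (j : ℕ) : qfact j ≠ 0 := by
  apply Finset.prod_ne_zero_iff.mpr
  intro i _
  exact qint_ne_zero (by positivity)

lemma qfall_top (m : ℤ) (j : ℕ) : qfall m (j + 1) = qint m * qfall (m - 1) j := by
  rw [qfall, Finset.prod_range_succ', qfall]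
  simp only [Nat.cast_add, Nat.cast_one, Nat.cast_zero, sub_zero]
  rw [mul_comm]
  congr 1
  apply Finset.prod_congr rfl
  intro i _
  congr 1
  ring

lemma qfall_bot (m : ℤ) (j : ℕ) : qfall m (j + 1) = qfall m j * qint (m - j) := by
  rw [qfall, Finset.prod_range_succ, qfall]

lemma qfall_add (m : ℤ) (a b : ℕ) : qfall m (a + b) = qfall m a * qfall (m - a) b := by
  rw [qfall, Finset.prod_range_add, qfall, qfall]
  congr 1
  apply Finset.prod_congr rfl
  intro i _
  congr 1
  push_cast
  ring

lemma qbinom_pascal (m : ℤ) (j : ℕ) :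
    qbinom m (j + 1) = vv ^ (-(j + 1 : ℤ)) * qbinom (m - 1) (j + 1) +
      vv ^ (m - (j + 1)) * qbinom (m - 1) j := by
  rw [qbinom, qbinom, qbinom, qfact_succ]
  have h1 := qfact_ne_zero j
  have h2 := qint_ne_zero (show (0:ℤ) < (j:ℤ) + 1 by positivity)
  field_simp
  have key : qfall m (j + 1) = vv ^ (-(j+1:ℤ)) * qfall (m-1) (j+1)
      + vv ^ (m - (j+1)) * qint (j+1) * qfall (m-1) j := by
    rw [qfall_top m j, qfall_bot (m-1) j, qint_split m ((j:ℤ)+1),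
        show m - ((j:ℤ)+1) = m - 1 - j by ring]
    push_cast
    ring
  rw [key]
  ring

lemma qint_zero : qint 0 = 0 := by simp [qint]

lemma qbinom_overflow (M : ℕ) : qbinom (M : ℤ) (M + 1) = 0 := by
  rw [qbinom, qfall]
  rw [Finset.prod_eq_zero (Finset.self_mem_range_succ M)]
  · simp
  · simp [qint_zero]

lemma qbinom_zero (m : ℤ) : qbinom m 0 = 1 := by simp [qbinom, qfall, qfact]

/-- helper exponent: `j(j+3)/2`. -/
def cfun : ℕ → ℕ
  | 0 => 0
  | j + 1 => cfun j + j + 2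

lemma two_cfun (j : ℕ) : 2 * cfun j = j * (j + 3) := by
  induction j with
  | zero => rfl
  | succ j ih =>
      show 2 * (cfun j + j + 2) = (j + 1) * (j + 1 + 3)
      rw [Nat.mul_add, Nat.mul_add, ih]
      ring

/-- `∏_{a=A+1}^{A+j} (v^a - v^{-a})` -/
def PP (A : ℤ) (j : ℕ) : Fv := ∏ i ∈ Finset.range j, (vv ^ (A + 1 + i) - vv ^ (-(A + 1 + i)))

lemma PP_succ' (A : ℤ) (j : ℕ) :
    PP A (j + 1) = (vv ^ (A + 1) - vv ^ (-(A + 1))) * PP (A + 1) j := by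
  rw [PP, Finset.prod_range_succ', mul_comm, PP]
  congr 1
  · norm_num
  · apply Finset.prod_congr rfl
    intro i _
    congr 2 <;> push_cast <;> ring

def GG (M : ℕ) (A : ℤ) : Fv :=
  ∑ j ∈ Finset.range (M + 1),
    (-1) ^ j * qbinom (M : ℤ) j * vv ^ ((j : ℤ) * ((M : ℤ) - A) - (cfun j : ℤ)) * PP A j

lemma GG_val (M : ℕ) : ∀ A : ℤ, GG M A = vv ^ (-2 * (M : ℤ) * (A + 1)) := by
  induction M with
  | zero =>
      intro A
      simp [GG, qbinom_zero, PP, cfun]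
  | succ M ih =>
      intro A
      have hv := vv_ne_zero
      have key : GG (M + 1) A = GG M A
          - (vv ^ (A + 1) - vv ^ (-(A + 1))) * vv ^ (2 * (M : ℤ) - A - 1) * GG M (A + 1) := by
        have hpas : ∀ j : ℕ,
            (-1 : Fv) ^ (j+1) * qbinom ((M+1 : ℕ) : ℤ) (j+1) *
              vv ^ ((((j+1) : ℕ) : ℤ) * (((M+1 : ℕ) : ℤ) - A) - ((cfun (j+1) : ℕ) : ℤ)) *
              PP A (j+1)
            = ((-1 : Fv) ^ (j+1) * qbinom ((M : ℕ) : ℤ) (j+1) *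
                vv ^ ((((j+1) : ℕ) : ℤ) * (((M : ℕ) : ℤ) - A) - ((cfun (j+1) : ℕ) : ℤ)) *
                PP A (j+1))
              - (vv ^ (A + 1) - vv ^ (-(A + 1))) * vv ^ (2 * (M : ℤ) - A - 1) *
                ((-1 : Fv) ^ j * qbinom ((M : ℕ) : ℤ) j *
                  vv ^ (((j : ℕ) : ℤ) * (((M : ℕ) : ℤ) - (A+1)) - ((cfun j : ℕ) : ℤ)) *
                  PP (A+1) j) := by
          intro j
          have hM : ((M+1 : ℕ) : ℤ) = (M : ℤ) + 1 := by push_cast; ring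
          have hpad : qbinom ((M+1 : ℕ) : ℤ) (j+1)
              = vv ^ (-((j:ℤ) + 1)) * qbinom ((M : ℕ) : ℤ) (j+1)
                + vv ^ (((M:ℤ)+1) - ((j:ℤ)+1)) * qbinom ((M : ℕ) : ℤ) j := by
            rw [hM, qbinom_pascal ((M:ℤ)+1) j]
            norm_num
          have m2 : vv ^ (-((j:ℤ)+1)) * vv ^ ((((j+1) : ℕ) : ℤ) * (((M+1 : ℕ) : ℤ) - A) - ((cfun (j+1) : ℕ) : ℤ))
              = vv ^ ((((j+1) : ℕ) : ℤ) * (((M : ℕ) : ℤ) - A) - ((cfun (j+1) : ℕ) : ℤ)) := by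
            rw [← zpow_add₀ hv]; congr 1; push_cast; ring
          have m1 : vv ^ (((M:ℤ)+1) - ((j:ℤ)+1)) * vv ^ ((((j+1) : ℕ) : ℤ) * (((M+1 : ℕ) : ℤ) - A) - ((cfun (j+1) : ℕ) : ℤ))
              = vv ^ (2*(M:ℤ)-A-1) * vv ^ (((j : ℕ) : ℤ) * (((M : ℕ) : ℤ) - (A+1)) - ((cfun j : ℕ) : ℤ)) := by
            rw [← zpow_add₀ hv, ← zpow_add₀ hv]; congr 1
            rw [show (cfun (j+1) : ℤ) = (cfun j : ℤ) + j + 2 from by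
              show ((cfun j + j + 2 : ℕ) : ℤ) = _; push_cast; ring]
            push_cast; ring
          rw [hpad, PP_succ']
          linear_combination ((-1 : Fv)^(j+1) * (vv ^ (A + 1) - vv ^ (-(A + 1))) * PP (A+1) j * qbinom ((M : ℕ) : ℤ) (j+1)) * m2
            + ((-1 : Fv)^(j+1) * (vv ^ (A + 1) - vv ^ (-(A + 1))) * PP (A+1) j * qbinom ((M : ℕ) : ℤ) j) * m1
        rw [GG, Finset.sum_range_succ']
        rw [Finset.sum_congr rfl (fun j _ => hpas j)]
        rw [Finset.sum_sub_distrib, ← Finset.mul_sum]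
        have hGA1 : (∑ j ∈ Finset.range (M+1),
            ((-1 : Fv) ^ j * qbinom ((M : ℕ) : ℤ) j *
              vv ^ (((j : ℕ) : ℤ) * (((M : ℕ) : ℤ) - (A+1)) - ((cfun j : ℕ) : ℤ)) *
              PP (A+1) j)) = GG M (A+1) := by
          rw [GG]
        have h00 : (-1 : Fv) ^ 0 * qbinom ((M+1 : ℕ) : ℤ) 0 *
            vv ^ (((0:ℕ) : ℤ) * (((M+1 : ℕ) : ℤ) - A) - ((cfun 0 : ℕ) : ℤ)) * PP A 0
            = (-1 : Fv) ^ 0 * qbinom ((M : ℕ) : ℤ) 0 *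
            vv ^ (((0:ℕ) : ℤ) * (((M : ℕ) : ℤ) - A) - ((cfun 0 : ℕ) : ℤ)) * PP A 0 := by
          simp [qbinom_zero]
        have hA : (∑ j ∈ Finset.range (M+1),
              ((-1 : Fv) ^ (j+1) * qbinom ((M : ℕ) : ℤ) (j+1) *
                vv ^ ((((j+1) : ℕ) : ℤ) * (((M : ℕ) : ℤ) - A) - ((cfun (j+1) : ℕ) : ℤ)) *
                PP A (j+1)))
            + (-1 : Fv) ^ 0 * qbinom ((M : ℕ) : ℤ) 0 *
              vv ^ (((0:ℕ) : ℤ) * (((M : ℕ) : ℤ) - A) - ((cfun 0 : ℕ) : ℤ)) * PP A 0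
            = GG M A := by
          rw [← Finset.sum_range_succ' (fun j => ((-1 : Fv) ^ j * qbinom ((M : ℕ) : ℤ) j *
                vv ^ (((j : ℕ) : ℤ) * (((M : ℕ) : ℤ) - A) - ((cfun j : ℕ) : ℤ)) *
                PP A j)) (M+1)]
          rw [Finset.sum_range_succ, GG]
          have hov : qbinom ((M : ℕ) : ℤ) (M+1) = 0 := qbinom_overflow M
          rw [hov]
          ring
        rw [sub_add_eq_add_sub, h00, hA, hGA1]
      rw [key, ih A, ih (A + 1)]
      simp only [sub_mul, ← zpow_add₀ hv]
      push_cast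
      ring_nf

lemma brace_eq (m : ℕ) : qbrace m = (vv - vv⁻¹) ^ m * qfact m := by
  rw [qbrace, qfact,
      show (vv - vv⁻¹) ^ m = ∏ _i ∈ Finset.range m, (vv - vv⁻¹) from by
        rw [Finset.prod_const, Finset.card_range],
      ← Finset.prod_mul_distrib]
  apply Finset.prod_congr rfl
  intro a _
  rw [mul_comm, qint_mul]
  have e1 : vv ^ (a + 1) = vv ^ ((a : ℤ) + 1) := by
    rw [← zpow_natCast vv (a+1)]; norm_num
  have e2 : vv⁻¹ ^ (a + 1) = vv ^ (-((a : ℤ) + 1)) := by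
    rw [inv_pow, ← zpow_natCast vv (a+1), ← zpow_neg]
    norm_num
  rw [e1, e2]

lemma PP_eq (A : ℤ) (j : ℕ) : PP A j = (vv - vv⁻¹) ^ j * qfall (A + j) j := by
  rw [PP, qfall,
      show (vv - vv⁻¹) ^ j = ∏ _i ∈ Finset.range j, (vv - vv⁻¹) from by
        rw [Finset.prod_const, Finset.card_range],
      ← Finset.prod_mul_distrib]
  rw [← Finset.prod_range_reflect (fun i => (vv - vv⁻¹) * qint (A + j - i)) j]
  apply Finset.prod_congr rfl
  intro i hi
  rw [Finset.mem_range] at hi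
  rw [mul_comm, qint_mul]
  congr 2 <;>
  · rw [Nat.cast_sub (by omega), Nat.cast_sub (by omega)]
    push_cast
    ring

/-- For `r = n - 2p ≥ 0` and `0 ≤ s ≤ n - p`:
`v^{s(1-r)+2(p-n)(p+1)} [p+s]_{(s)} = ∑_{k=s}^{n-p} (-1)^{k+s} ([p+k]_{(k)}/[k-s]!)
[(n-p-s) choose (k-s)] v^{k(r-2k-1)+(k-s)(3k+s-1)/2} {k-s}`. -/
theorem link_identity (n p r s : ℕ) (hn : n = 2 * p + r) (hs : s ≤ n - p) :
    vv ^ ((s : ℤ) * (1 - (r : ℤ)) + 2 * ((p : ℤ) - n) * ((p : ℤ) + 1)) * qfall ((p : ℤ) + s) s =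
      ∑ k ∈ Finset.Icc s (n - p),
        (-1) ^ (k + s) * (qfall ((p : ℤ) + k) k / qfact (k - s)) *
          qbinom ((n : ℤ) - p - s) (k - s) *
          vv ^ ((k : ℤ) * ((r : ℤ) - 2 * k - 1) + ((k : ℤ) - s) * (3 * (k : ℤ) + s - 1) / 2) *
          qbrace (k - s) := by
  have hv := vv_ne_zero
  set M : ℕ := n - p - s with hMdef
  have hsp : s ≤ p + r := by omega
  have hMz : (M : ℤ) = (p : ℤ) + r - s := by simp only [hMdef]; omega
  have hnz : (n : ℤ) = 2 * p + r := by omega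
  have hrange : n - p + 1 - s = M + 1 := by omega
  rw [← Finset.Ico_add_one_right_eq_Icc, Finset.sum_Ico_eq_sum_range, hrange]
  have hterm : ∀ j : ℕ,
      (-1 : Fv) ^ (s + j + s) * (qfall ((p : ℤ) + ((s + j : ℕ) : ℤ)) (s + j) / qfact (s + j - s)) *
        qbinom ((n : ℤ) - p - s) (s + j - s) *
        vv ^ (((s + j : ℕ) : ℤ) * ((r : ℤ) - 2 * ((s + j : ℕ) : ℤ) - 1) +
          (((s + j : ℕ) : ℤ) - s) * (3 * ((s + j : ℕ) : ℤ) + s - 1) / 2) *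
        qbrace (s + j - s)
      = (vv ^ ((s : ℤ) * ((r : ℤ) - 2 * s - 1)) * qfall ((p : ℤ) + s) s) *
        ((-1 : Fv) ^ j * qbinom (M : ℤ) j *
          vv ^ ((j : ℤ) * ((M : ℤ) - ((p : ℤ) + s)) - (cfun j : ℤ)) * PP ((p : ℤ) + s) j) := by
    intro j
    have h1 : s + j - s = j := by omega
    rw [h1]
    have hsign : ((-1 : Fv)) ^ (s + j + s) = (-1) ^ j := by
      rw [show s + j + s = 2 * s + j by ring, pow_add, pow_mul]
      norm_num
    rw [hsign]
    have hqb : ((n : ℤ) - p - s) = (M : ℤ) := by omega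
    rw [hqb]
    have hfall : qfall ((p : ℤ) + ((s + j : ℕ) : ℤ)) (s + j)
        = qfall ((p : ℤ) + s + j) j * qfall ((p : ℤ) + s) s := by
      rw [show (p : ℤ) + ((s + j : ℕ) : ℤ) = (p : ℤ) + s + j by push_cast; ring,
          show s + j = j + s from by omega, qfall_add]
      congr 2
      push_cast
      ring
    rw [hfall]
    have hexp : ((s + j : ℕ) : ℤ) * ((r : ℤ) - 2 * ((s + j : ℕ) : ℤ) - 1) +
          (((s + j : ℕ) : ℤ) - s) * (3 * ((s + j : ℕ) : ℤ) + s - 1) / 2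
        = (s : ℤ) * ((r : ℤ) - 2 * s - 1) + ((j : ℤ) * ((M : ℤ) - ((p : ℤ) + s)) - (cfun j : ℤ)) := by
      have h2c : 2 * (cfun j : ℤ) = (j : ℤ) * (j + 3) := by
        exact_mod_cast two_cfun j
      rw [show (((s + j : ℕ) : ℤ) - s) * (3 * ((s + j : ℕ) : ℤ) + s - 1)
          = 2 * (3 * (cfun j : ℤ) + 2 * s * j - 5 * j) from by push_cast; linear_combination (-3) * h2c]
      rw [Int.mul_ediv_cancel_left _ two_ne_zero, hMz]
      push_cast
      linear_combination 2 * h2c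
    rw [hexp, zpow_add₀ hv]
    rw [brace_eq, PP_eq, show (p : ℤ) + s + j = (p : ℤ) + s + (j : ℕ) from by push_cast; ring]
    have hf := qfact_ne_zero j
    field_simp
  rw [Finset.sum_congr rfl (fun j _ => hterm j), ← Finset.mul_sum]
  have : (∑ j ∈ Finset.range (M + 1),
      ((-1 : Fv) ^ j * qbinom (M : ℤ) j *
        vv ^ ((j : ℤ) * ((M : ℤ) - ((p : ℤ) + s)) - (cfun j : ℤ)) * PP ((p : ℤ) + s) j))
      = GG M ((p : ℤ) + s) := by rw [GG]
  rw [this, GG_val M ((p : ℤ) + s)]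
  conv_rhs => rw [mul_right_comm, ← zpow_add₀ hv]
  congr 2
  linear_combination (-2 * ((p : ℤ) + 1)) * hnz + (2 * ((p : ℤ) + s + 1)) * hMz
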